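/- There is a constant C = 20√2/3 such that for every real r ≥ 1 and every f ∈ L²((0, ∞)), the function g(x) = ∫₀^∞ (2t/(1 − t²) − 2r·t^(2r−1)/(1 − t^(2r)))·|f(t·x)| dt (defined for x > 0) satisfies ‖g‖_{L²(0,∞)} ≤ C·r·‖f‖_{L²(0,∞)}. -/

import Mathlib

/-!
The kernel `K_r` acts by multiplicative convolution, so it is bounded on `L²(0, ∞)` by Schur's test
with the weight `t^(-1/2)`: Cauchy–Schwarz against this weight, Tonelli, and the dilation
`y = t x` bound the norm by `∫₀^∞ K_r(t) t^(-1/2) dt`. Bernoulli's inequality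
`t^(2r) ≥ 1 + r (t² - 1)` gives `K_r(t) ≤ 2 (r - 1) / t` for all `t > 0`, and near `0` simply
`K_r(t) ≤ 2t / (1 - t²) ≤ 8t/3`; integrating these majorants over `(1/2, ∞)` and `(0, 1/2]`
gives `∫₀^∞ K_r(t) t^(-1/2) dt ≤ 4√2 r ≤ 20√2 r / 3`.
-/

open MeasureTheory Set
open scoped ENNReal

theorem lintegral_Ioi_comp_mul_left {t : ℝ} (ht : 0 < t) {g : ℝ → ℝ≥0∞} (hg : Measurable g) :
    ∫⁻ x in Ioi 0, g (t * x) = ENNReal.ofReal t⁻¹ * ∫⁻ y in Ioi 0, g y := by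
  have hpre : (t * ·) ⁻¹' Ioi (0 : ℝ) = Ioi 0 := by
    ext x; simp [mul_pos_iff_of_pos_left ht]
  conv_lhs => rw [← hpre]
  rw [← setLIntegral_map measurableSet_Ioi hg (measurable_const_mul t),
    Real.map_volume_mul_left ht.ne', Measure.restrict_smul, lintegral_smul_measure,
    abs_of_pos (inv_pos.mpr ht), smul_eq_mul]

theorem ENNReal.lintegral_mul_sq_le_weighted {α : Type*} [MeasurableSpace α] {μ : Measure α}
    {a b w : α → ℝ≥0∞} (ha : AEMeasurable a μ) (hb : AEMeasurable b μ) (hw : AEMeasurable w μ)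
    (hw0 : ∀ᵐ x ∂μ, w x ≠ 0) (hwtop : ∀ᵐ x ∂μ, w x ≠ ∞) :
    (∫⁻ x, a x * b x ∂μ) ^ 2 ≤ (∫⁻ x, a x * w x ∂μ) * ∫⁻ x, a x * (w x)⁻¹ * b x ^ 2 ∂μ := by
  have hsplit : ∀ᵐ x ∂μ, a x * b x =
      (a x * w x) ^ (1 / 2 : ℝ) * (a x * (w x)⁻¹ * b x ^ 2) ^ (1 / 2 : ℝ) := by
    filter_upwards [hw0, hwtop] with x h0 htop
    rw [← ENNReal.mul_rpow_of_nonneg _ _ (by norm_num),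
      show a x * w x * (a x * (w x)⁻¹ * b x ^ 2) = (a x * b x) ^ 2 * (w x * (w x)⁻¹) by ring,
      ENNReal.mul_inv_cancel h0 htop, mul_one, ← ENNReal.rpow_natCast, ← ENNReal.rpow_mul]
    norm_num
  have hhalf : ∀ z : ℝ≥0∞, (z ^ (1 / 2 : ℝ)) ^ (2 : ℝ) = z := fun z => by
    rw [← ENNReal.rpow_mul]; norm_num
  have holder := ENNReal.lintegral_mul_le_Lp_mul_Lq μ Real.HolderConjugate.two_two
    (f := fun x => (a x * w x) ^ (1 / 2 : ℝ))
    (g := fun x => (a x * (w x)⁻¹ * b x ^ 2) ^ (1 / 2 : ℝ))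
    (by fun_prop) (by fun_prop)
  simp only [hhalf] at holder
  rw [lintegral_congr_ae hsplit, ← ENNReal.rpow_two]
  calc _ ≤ _ := ENNReal.rpow_le_rpow holder (by norm_num)
    _ = _ := by
      rw [← ENNReal.mul_rpow_of_nonneg _ _ (by norm_num), ← ENNReal.rpow_mul]
      norm_num

theorem lintegral_Ioi_dilation_sq_le {k g : ℝ → ℝ≥0∞} (hk : Measurable k) (hg : Measurable g) :
    ∫⁻ x in Ioi 0, (∫⁻ t in Ioi 0, k t * g (t * x)) ^ 2
      ≤ (∫⁻ t in Ioi 0, k t * ENNReal.ofReal t ^ (-(1 / 2) : ℝ)) ^ 2 * ∫⁻ y in Ioi 0, g y ^ 2 := by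
  set w : ℝ → ℝ≥0∞ := fun t => ENNReal.ofReal t ^ (-(1 / 2) : ℝ)
  set A := ∫⁻ t in Ioi 0, k t * w t
  have hw_ne_zero : ∀ t ∈ Ioi (0 : ℝ), w t ≠ 0 := fun t _ => by
    simp [w, ENNReal.rpow_eq_zero_iff]
  have hw_ne_top : ∀ t ∈ Ioi (0 : ℝ), w t ≠ ∞ := fun t ht => by
    simp [w, ENNReal.rpow_eq_top_iff, mem_Ioi.mp ht]
  -- `t⁻¹` from the dilation `y = t x` turns the weight `1 / w t` back into `w t`.
  have hw_dilation : ∀ t ∈ Ioi (0 : ℝ), (w t)⁻¹ * ENNReal.ofReal t⁻¹ = w t := fun t ht => by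
    have h0 : ENNReal.ofReal t ≠ 0 := by simpa using ht
    simp only [w]
    rw [← ENNReal.rpow_neg, ENNReal.ofReal_inv_of_pos ht, ← ENNReal.rpow_neg_one,
      ← ENNReal.rpow_add _ _ h0 ENNReal.ofReal_ne_top]
    norm_num
  calc ∫⁻ x in Ioi 0, (∫⁻ t in Ioi 0, k t * g (t * x)) ^ 2
      ≤ ∫⁻ x in Ioi 0, A * ∫⁻ t in Ioi 0, k t * (w t)⁻¹ * g (t * x) ^ 2 :=
        lintegral_mono fun x => ENNReal.lintegral_mul_sq_le_weighted (by fun_prop) (by fun_prop)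
          (by fun_prop) ((ae_restrict_iff' measurableSet_Ioi).2 (.of_forall hw_ne_zero))
          ((ae_restrict_iff' measurableSet_Ioi).2 (.of_forall hw_ne_top))
    _ = A * ∫⁻ t in Ioi 0, ∫⁻ x in Ioi 0, k t * (w t)⁻¹ * g (t * x) ^ 2 := by
      rw [lintegral_const_mul, lintegral_lintegral_swap (by fun_prop)]
      fun_prop
    _ = A * ∫⁻ t in Ioi 0, k t * w t * ∫⁻ y in Ioi 0, g y ^ 2 := by
      refine congrArg (A * ·) (setLIntegral_congr_fun measurableSet_Ioi fun t ht => ?_)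
      rw [lintegral_const_mul _ (by fun_prop),
        lintegral_Ioi_comp_mul_left ht (g := fun y => g y ^ 2) (by fun_prop), ← mul_assoc,
        mul_assoc (k t), hw_dilation t ht]
    _ = A ^ 2 * ∫⁻ y in Ioi 0, g y ^ 2 := by
      rw [lintegral_mul_const _ (by fun_prop)]; ring

theorem lintegral_Ioi_dilation_le_mul_eLpNorm {k : ℝ → ℝ≥0∞} (hk : Measurable k) {f : ℝ → ℝ}
    (hf : AEStronglyMeasurable f (volume.restrict (Ioi 0))) :
    (∫⁻ x in Ioi 0, (∫⁻ t in Ioi 0, k t * ENNReal.ofReal |f (t * x)|) ^ (2 : ℝ)) ^ (1 / 2 : ℝ)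
      ≤ (∫⁻ t in Ioi 0, k t * ENNReal.ofReal t ^ (-(1 / 2) : ℝ)) *
          eLpNorm f 2 (volume.restrict (Ioi 0)) := by
  have hf_ae : ∀ᵐ y, y ∈ Ioi (0 : ℝ) → f y = hf.mk f y :=
    (ae_restrict_iff' measurableSet_Ioi).mp hf.ae_eq_mk
  have h_inner : ∀ x ∈ Ioi (0 : ℝ), ∫⁻ t in Ioi 0, k t * ENNReal.ofReal |f (t * x)| =
      ∫⁻ t in Ioi 0, k t * ENNReal.ofReal |hf.mk f (t * x)| := fun x hx => by
    have h_qmp : Measure.QuasiMeasurePreserving (· * x) volume volume :=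
      ⟨measurable_mul_const x, by
        rw [Real.map_volume_mul_right (mem_Ioi.mp hx).ne']; exact Measure.smul_absolutelyContinuous⟩
    refine setLIntegral_congr_fun_ae measurableSet_Ioi ?_
    filter_upwards [h_qmp.ae hf_ae] with t ht ht0
    rw [ht (mul_pos ht0 (mem_Ioi.mp hx))]
  rw [setLIntegral_congr_fun measurableSet_Ioi fun x hx => by rw [h_inner x hx],
    eLpNorm_congr_ae hf.ae_eq_mk,
    eLpNorm_eq_lintegral_rpow_enorm_toReal (by norm_num) (by norm_num)]
  simp only [ENNReal.rpow_two, Real.enorm_eq_ofReal_abs, ENNReal.toReal_ofNat]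
  calc _ ≤ ((∫⁻ t in Ioi 0, k t * ENNReal.ofReal t ^ (-(1 / 2) : ℝ)) ^ 2 *
        ∫⁻ y in Ioi 0, ENNReal.ofReal |hf.mk f y| ^ 2) ^ (1 / 2 : ℝ) :=
      ENNReal.rpow_le_rpow (lintegral_Ioi_dilation_sq_le hk (by fun_prop)) (by norm_num)
    _ = _ := by
      rw [ENNReal.mul_rpow_of_nonneg _ _ (by norm_num), ← ENNReal.rpow_two, ← ENNReal.rpow_mul]
      norm_num

open Real

noncomputable def hrKernel (r t : ℝ) : ℝ :=
  2 * t / (1 - t ^ 2) - 2 * r * t ^ (2 * r - 1) / (1 - t ^ (2 * r))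

theorem measurable_hrKernel (r : ℝ) : Measurable (hrKernel r) := by
  unfold hrKernel; fun_prop

theorem one_add_mul_sq_sub_one_le_rpow {r t : ℝ} (hr : 1 ≤ r) (ht : 0 < t) :
    1 + r * (t ^ 2 - 1) ≤ t ^ (2 * r) := by
  have h := one_add_mul_self_le_rpow_one_add (s := t ^ 2 - 1) (by nlinarith) hr
  rw [add_sub_cancel, ← rpow_natCast, ← rpow_mul ht.le] at h
  simpa using h

theorem hrKernel_le_of_le_half {r t : ℝ} (hr : 0 ≤ r) (ht : 0 < t) (ht2 : t ≤ 1 / 2) :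
    hrKernel r t ≤ 8 / 3 * t := by
  have hsub : 0 ≤ 2 * r * t ^ (2 * r - 1) / (1 - t ^ (2 * r)) := by
    have := rpow_le_one ht.le (by linarith) (by linarith : 0 ≤ 2 * r)
    positivity
  have hfirst : 2 * t / (1 - t ^ 2) ≤ 8 / 3 * t := by
    rw [div_le_iff₀ (by nlinarith)]
    nlinarith
  unfold hrKernel
  linarith

theorem hrKernel_le {r t : ℝ} (hr : 1 ≤ r) (ht : 0 < t) : hrKernel r t ≤ 2 * (r - 1) / t := by
  rcases eq_or_ne t 1 with rfl | ht1
  · simp [hrKernel]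
    linarith
  have hr2 : 0 < 2 * r := by linarith
  have hD : 0 < (1 - t ^ 2) * (1 - t ^ (2 * r)) := by
    rcases ht1.lt_or_gt with h | h
    · exact mul_pos (by nlinarith) (by linarith [rpow_lt_one ht.le h hr2])
    · exact mul_pos_of_neg_of_neg (by nlinarith) (by linarith [one_lt_rpow h hr2])
  have hdiff : 2 * (r - 1) / t - hrKernel r t =
      2 * (t ^ (2 * r) - (1 + r * (t ^ 2 - 1))) / (t * ((1 - t ^ 2) * (1 - t ^ (2 * r)))) := by
    have h1 : 1 - t ^ 2 ≠ 0 := left_ne_zero_of_mul hD.ne'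
    have h2 : 1 - t ^ (2 * r) ≠ 0 := right_ne_zero_of_mul hD.ne'
    rw [hrKernel, rpow_sub ht, rpow_one]
    field_simp
    ring
  rw [← sub_nonneg, hdiff]
  exact div_nonneg (by linarith [one_add_mul_sq_sub_one_le_rpow hr ht]) (mul_pos ht hD).le

theorem setLIntegral_ofReal_le_ofReal_setIntegral {α : Type*} [MeasurableSpace α] {μ : Measure α}
    {s : Set α} {F m : α → ℝ} (hs : MeasurableSet s) (hm : IntegrableOn m s μ)
    (hm0 : ∀ x ∈ s, 0 ≤ m x) (hFm : ∀ x ∈ s, F x ≤ m x) :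
    ∫⁻ x in s, ENNReal.ofReal (F x) ∂μ ≤ ENNReal.ofReal (∫ x in s, m x ∂μ) := by
  rw [ofReal_integral_eq_lintegral_ofReal hm ((ae_restrict_iff' hs).2 (.of_forall hm0))]
  exact setLIntegral_mono' hs fun x hx => ENNReal.ofReal_le_ofReal (hFm x hx)

theorem setLIntegral_Ioc_hrKernel_mul_rpow_le {r : ℝ} (hr : 0 ≤ r) :
    ∫⁻ t in Ioc 0 (1 / 2), ENNReal.ofReal (hrKernel r t * t ^ (-(1 / 2) : ℝ))
      ≤ ENNReal.ofReal (4 * √2 / 9) := by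
  have hbound : ∀ t ∈ Ioc (0 : ℝ) (1 / 2),
      hrKernel r t * t ^ (-(1 / 2) : ℝ) ≤ 8 / 3 * t ^ (1 / 2 : ℝ) := fun t ⟨ht, ht2⟩ => calc
      _ ≤ 8 / 3 * t * t ^ (-(1 / 2) : ℝ) :=
        mul_le_mul_of_nonneg_right (hrKernel_le_of_le_half hr ht ht2) (rpow_nonneg ht.le _)
      _ = 8 / 3 * t ^ (1 / 2 : ℝ) := by
        rw [mul_assoc, ← rpow_one_add' ht.le (by norm_num)]; norm_num
  refine (setLIntegral_ofReal_le_ofReal_setIntegral measurableSet_Ioc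
    ((intervalIntegral.intervalIntegrable_rpow' (by norm_num)).1.const_mul _)
    (fun t ht => by have := rpow_nonneg ht.1.le (1 / 2 : ℝ); positivity) hbound).trans_eq ?_
  have hpow : (1 / 2 : ℝ) ^ ((1 / 2 : ℝ) + 1) = √2 / 4 := by
    rw [rpow_add (by norm_num), rpow_one, ← sqrt_eq_rpow, one_div, sqrt_inv]
    field_simp
    norm_num
  rw [← intervalIntegral.integral_of_le (by norm_num), intervalIntegral.integral_const_mul,
    integral_rpow (Or.inl (by norm_num)), zero_rpow (by norm_num), hpow]
  ring_nf

theorem setLIntegral_Ioi_hrKernel_mul_rpow_le {r : ℝ} (hr : 1 ≤ r) :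
    ∫⁻ t in Ioi (1 / 2), ENNReal.ofReal (hrKernel r t * t ^ (-(1 / 2) : ℝ))
      ≤ ENNReal.ofReal (4 * √2 * (r - 1)) := by
  have hbound : ∀ t ∈ Ioi (1 / 2 : ℝ),
      hrKernel r t * t ^ (-(1 / 2) : ℝ) ≤ 2 * (r - 1) * t ^ (-(1 / 2) - 1 : ℝ) := fun t ht => by
    have ht0 : 0 < t := lt_trans (by norm_num) ht
    calc _ ≤ 2 * (r - 1) / t * t ^ (-(1 / 2) : ℝ) :=
          mul_le_mul_of_nonneg_right (hrKernel_le hr ht0) (rpow_nonneg ht0.le _)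
      _ = _ := by rw [rpow_sub_one ht0.ne']; ring
  refine (setLIntegral_ofReal_le_ofReal_setIntegral measurableSet_Ioi
    ((integrableOn_Ioi_rpow_of_lt (by norm_num) (by norm_num)).const_mul _)
    (fun t ht => by
      have := rpow_nonneg (lt_trans (by norm_num) ht).le (-(1 / 2) - 1 : ℝ)
      have : 0 ≤ r - 1 := by linarith
      positivity) hbound).trans_eq ?_
  have hpow : (1 / 2 : ℝ) ^ (-(1 / 2) : ℝ) = √2 := by
    rw [rpow_neg (by norm_num), ← sqrt_eq_rpow, ← sqrt_inv]; norm_num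
  rw [integral_const_mul, integral_Ioi_rpow_of_lt (by norm_num) (by norm_num),
    show (-(1 / 2) - 1 + 1 : ℝ) = -(1 / 2) by ring, hpow]
  ring_nf

theorem lintegral_hrKernel_mul_rpow_le {r : ℝ} (hr : 1 ≤ r) :
    ∫⁻ t in Ioi 0, ENNReal.ofReal (hrKernel r t) * ENNReal.ofReal t ^ (-(1 / 2) : ℝ)
      ≤ ENNReal.ofReal (4 * √2 * r) :=
  calc _ = ∫⁻ t in Ioi 0, ENNReal.ofReal (hrKernel r t * t ^ (-(1 / 2) : ℝ)) :=
        setLIntegral_congr_fun measurableSet_Ioi fun t ht => by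
          rw [ENNReal.ofReal_rpow_of_pos ht, ENNReal.ofReal_mul' (rpow_nonneg ht.le _)]
    _ = (∫⁻ t in Ioc 0 (1 / 2), ENNReal.ofReal (hrKernel r t * t ^ (-(1 / 2) : ℝ))) +
          ∫⁻ t in Ioi (1 / 2), ENNReal.ofReal (hrKernel r t * t ^ (-(1 / 2) : ℝ)) := by
        rw [← Ioc_union_Ioi_eq_Ioi (by norm_num : (0 : ℝ) ≤ 1 / 2),
          lintegral_union measurableSet_Ioi (Ioc_disjoint_Ioi le_rfl)]
    _ ≤ ENNReal.ofReal (4 * √2 / 9) + ENNReal.ofReal (4 * √2 * (r - 1)) :=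
        add_le_add (setLIntegral_Ioc_hrKernel_mul_rpow_le (by linarith))
          (setLIntegral_Ioi_hrKernel_mul_rpow_le hr)
    _ ≤ ENNReal.ofReal (4 * √2 * r) := by
        rw [← ENNReal.ofReal_add (by positivity) (by nlinarith [sqrt_nonneg 2])]
        exact ENNReal.ofReal_le_ofReal (by nlinarith [sqrt_nonneg 2])

/-- Key `L²` estimate for `H^(r) − H^(1)`: there is a constant `C = 20√2/3` such that for all
`r ≥ 1` and `f ∈ L²((0,∞))`, the function
`g(x) = ∫₀^∞ (2t/(1−t²) − 2r·t^(2r−1)/(1−t^(2r)))·|f(tx)| dt` satisfies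
`‖g‖_{L²(0,∞)} ≤ C·r·‖f‖_{L²(0,∞)}` (interpreted in `[0,∞]`). -/
theorem Hr_L2_bound :
    ∃ C : ℝ, C = 20 * Real.sqrt 2 / 3 ∧
      ∀ (r : ℝ), 1 ≤ r → ∀ f : ℝ → ℝ,
        MemLp f 2 (volume.restrict (Set.Ioi 0)) →
        (∫⁻ x in Set.Ioi (0 : ℝ),
            (∫⁻ t in Set.Ioi (0 : ℝ),
              ENNReal.ofReal
                ((2 * t / (1 - t ^ 2) - 2 * r * t ^ (2 * r - 1) / (1 - t ^ (2 * r))) *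
                  |f (t * x)|)) ^ (2 : ℝ)) ^ (1/2 : ℝ)
          ≤ ENNReal.ofReal (C * r) * eLpNorm f 2 (volume.restrict (Set.Ioi 0)) := by
  refine ⟨_, rfl, fun r hr f hf => ?_⟩
  simp only [ENNReal.ofReal_mul' (abs_nonneg _)]
  refine (lintegral_Ioi_dilation_le_mul_eLpNorm (measurable_hrKernel r).ennreal_ofReal
    hf.1).trans ?_
  gcongr
  refine (lintegral_hrKernel_mul_rpow_le hr).trans (ENNReal.ofReal_le_ofReal ?_)
  nlinarith [sqrt_nonneg 2]
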